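/- Let n ≥ 1, let E_{ij} denote the n×n matrix unit, and define Ê_{ij} = E_{ii} if i = j and Ê_{ij} = (E_{ij} + E_{ji})/√2 if i < j, indexed by pairs in S = {(i,j) : 1 ≤ i ≤ j ≤ n}. Then for any α = (i,j) and β = (k,l) in S, Σ_{γ∈S} ⟨[Ê_α, Ê_γ], [Ê_β, Ê_γ]⟩ = n δ_{αβ} − δ_α δ_β, where δ_{αβ} = δ_{ik}δ_{jl}, δ_α = δ_{ij}, δ_β = δ_{kl}. -/

import Mathlib

/-!
Write `⟨X, Y⟩ = tr (X Yᵀ)`. Since `Ê_β` and `Ê_γ` are symmetric, expanding the commutators and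
cycling traces turns the summand into
`tr ((Ê_α Ê_β + Ê_β Ê_α) Ê_γ²) - tr (Ê_α Ê_γ Ê_β Ê_γ) - tr (Ê_β Ê_γ Ê_α Ê_γ)`.
The whole sum over `γ ∈ S` is then governed by the completeness relation
`∑_γ Ê_γ M Ê_γ = (Mᵀ + tr M • 1) / 2`, which yields `n tr (Ê_α Ê_β) - tr Ê_α tr Ê_β`;
finally the `Ê` are orthonormal and `tr Ê_{ij} = δ_{ij}`.
-/

open Matrix BigOperators

def mcomm {n : ℕ} (A B : Matrix (Fin n) (Fin n) ℝ) : Matrix (Fin n) (Fin n) ℝ :=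
  A * B - B * A

/-- The standard orthonormal basis element `Ê_{ij}` of the space of symmetric matrices:
`Ê_{ii} = E_{ii}` and `Ê_{ij} = (E_{ij} + E_{ji})/√2` for `i ≠ j`. -/
noncomputable def Ehat {n : ℕ} (i j : Fin n) : Matrix (Fin n) (Fin n) ℝ :=
  if i = j then Matrix.single i i (1 : ℝ)
  else (1 / Real.sqrt 2) •
    (Matrix.single i j (1 : ℝ) + Matrix.single j i (1 : ℝ))

theorem Finset.two_nsmul_sum_filter_le {ι M : Type*} [Fintype ι] [LinearOrder ι]
    [AddCommMonoid M] (f : ι → ι → M) (hf : ∀ p q, f p q = f q p) :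
    2 • ∑ pq ∈ univ.filter (fun pq : ι × ι => pq.1 ≤ pq.2), f pq.1 pq.2
      = ∑ p, ∑ q, f p q + ∑ p, f p p := by
  have hsplit : ∀ p q, f p q + (if p = q then f p q else 0)
      = (if p ≤ q then f p q else 0) + (if q ≤ p then f q p else 0) := by
    intro p q
    rcases lt_trichotomy p q with h | rfl | h
    · simp [h.le, h.not_ge, h.ne]
    · simp
    · simp [h.le, h.not_ge, h.ne', hf p q]
  calc 2 • ∑ pq ∈ univ.filter (fun pq : ι × ι => pq.1 ≤ pq.2), f pq.1 pq.2
      = ∑ p, ∑ q, ((if p ≤ q then f p q else 0) + (if q ≤ p then f q p else 0)) := by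
        rw [sum_filter, Fintype.sum_prod_type, two_nsmul]
        simp only [sum_add_distrib]
        rw [sum_comm (f := fun p q => if q ≤ p then f q p else 0)]
    _ = ∑ p, ∑ q, f p q + ∑ p, f p p := by
        simp only [← hsplit, sum_add_distrib, sum_ite_eq, mem_univ, if_true]

theorem Matrix.sum_sum_single_diag {m R : Type*} [Fintype m] [DecidableEq m] [Semiring R]
    (M : Matrix m m R) : ∑ p, ∑ q, single p p (M q q) = trace M • (1 : Matrix m m R) := by
  have hinner (p : m) : ∑ q, single p p (M q q) = single p p (trace M) :=
    (map_sum (singleAddMonoidHom (α := R) p p) _ _).symm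
  simp only [hinner]
  rw [sum_single_eq_diagonal, smul_one_eq_diagonal]

section Ehat

variable {n : ℕ}

theorem sum_mcomm_mul_mcomm (A B C : Matrix (Fin n) (Fin n) ℝ) (hB : Bᵀ = B) (hC : Cᵀ = C) :
    ∑ a, ∑ b, mcomm A C a b * mcomm B C a b
      = trace ((A * B + B * A) * (C * C)) - trace (A * (C * B * C))
        - trace (B * (C * A * C)) := by
  have htranspose : (mcomm B C)ᵀ = C * B - B * C := by
    rw [mcomm, transpose_sub, transpose_mul, transpose_mul, hB, hC]
  refine (sum_hadamard_eq (mcomm A C) (mcomm B C)).trans ?_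
  rw [htranspose, mcomm, sub_mul, mul_sub, mul_sub, trace_sub, trace_sub, trace_sub]
  have hACCB : trace (A * C * (C * B)) = trace (B * A * (C * C)) := by
    simp only [← Matrix.mul_assoc]; rw [trace_mul_comm]; simp only [Matrix.mul_assoc]
  have hACBC : trace (A * C * (B * C)) = trace (A * (C * B * C)) := by
    simp only [Matrix.mul_assoc]
  have hCACB : trace (C * A * (C * B)) = trace (B * (C * A * C)) := by
    rw [← Matrix.mul_assoc, trace_mul_comm]
  have hCABC : trace (C * A * (B * C)) = trace (A * B * (C * C)) := by
    simp only [Matrix.mul_assoc]; rw [trace_mul_comm]; simp only [Matrix.mul_assoc]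
  rw [hACCB, hACBC, hCACB, hCABC, Matrix.add_mul, trace_add]
  ring

theorem Ehat_comm (i j : Fin n) : Ehat i j = Ehat j i := by
  unfold Ehat
  rcases eq_or_ne i j with rfl | h
  · rfl
  · simp [h, h.symm, add_comm]

theorem transpose_Ehat (i j : Fin n) : (Ehat i j)ᵀ = Ehat i j := by
  unfold Ehat
  split_ifs <;> simp [add_comm]

theorem trace_Ehat (i j : Fin n) : trace (Ehat i j) = if i = j then 1 else 0 := by
  unfold Ehat
  split_ifs with h
  · simp
  · simp [h, Ne.symm h]

theorem trace_Ehat_mul_Ehat {i j k l : Fin n} (hij : i ≤ j) (hkl : k ≤ l) :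
    trace (Ehat i j * Ehat k l) = if i = k ∧ j = l then 1 else 0 := by
  have hswap : i = l → j = k → i = j := by
    rintro rfl rfl; exact le_antisymm hij hkl
  have hsqrt : (√2)⁻¹ * (√2)⁻¹ = (2 : ℝ)⁻¹ := by
    rw [← mul_inv, Real.mul_self_sqrt zero_le_two]
  unfold Ehat
  split_ifs <;> simp_all [trace_single_mul, single_apply, Matrix.mul_add, Matrix.add_mul] <;> grind

theorem Ehat_mul_mul_Ehat (M : Matrix (Fin n) (Fin n) ℝ) (p q : Fin n) :
    Ehat p q * M * Ehat p q =
      (1 / 2 : ℝ) • (single p q (M q p) + single p p (M q q) + single q q (M p p)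
        + single q p (M p q)) - if p = q then single p p (M p p) else 0 := by
  have hsqrt : (1 / √2) * (1 / √2) = (1 / 2 : ℝ) := by
    rw [div_mul_div_comm, one_mul, Real.mul_self_sqrt zero_le_two]
  unfold Ehat
  split_ifs with h
  · subst h
    simp only [single_mul_mul_single, one_mul, mul_one]
    module
  · rw [Matrix.smul_mul, Matrix.smul_mul, Matrix.mul_smul, smul_smul, hsqrt]
    simp only [Matrix.add_mul, Matrix.mul_add, single_mul_mul_single, one_mul, mul_one, sub_zero]
    module

theorem sum_Ehat_mul_mul_Ehat (M : Matrix (Fin n) (Fin n) ℝ) :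
    ∑ pq ∈ Finset.univ.filter (fun pq : Fin n × Fin n => pq.1 ≤ pq.2),
      Ehat pq.1 pq.2 * M * Ehat pq.1 pq.2 = (1 / 2 : ℝ) • (Mᵀ + trace M • 1) := by
  have hfull : ∑ p, ∑ q, Ehat p q * M * Ehat p q
      = Mᵀ + trace M • 1 - ∑ p, single p p (M p p) := by
    simp only [Ehat_mul_mul_Ehat, Finset.sum_sub_distrib, Finset.sum_add_distrib,
      ← Finset.smul_sum, Finset.sum_ite_eq, Finset.mem_univ, if_true]
    rw [Finset.sum_comm (f := fun p q => single q q (M p p)),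
      Finset.sum_comm (f := fun p q => single q p (M p q)), sum_sum_single_diag]
    have htranspose : ∑ p, ∑ q, single p q (M q p) = Mᵀ := sum_sum_single fun p q => M q p
    rw [htranspose]
    module
  have hdiag (p : Fin n) : Ehat p p * M * Ehat p p = single p p (M p p) := by
    rw [Ehat, if_pos rfl, single_mul_mul_single, one_mul, mul_one]
  calc ∑ pq ∈ Finset.univ.filter (fun pq : Fin n × Fin n => pq.1 ≤ pq.2),
        Ehat pq.1 pq.2 * M * Ehat pq.1 pq.2
      = (1 / 2 : ℝ) • 2 • ∑ pq ∈ Finset.univ.filter (fun pq : Fin n × Fin n => pq.1 ≤ pq.2),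
        Ehat pq.1 pq.2 * M * Ehat pq.1 pq.2 := by module
    _ = (1 / 2 : ℝ) • (Mᵀ + trace M • 1) := by
      have hdouble := Finset.two_nsmul_sum_filter_le (fun p q => Ehat p q * M * Ehat p q)
        fun p q => by rw [Ehat_comm]
      beta_reduce at hdouble
      rw [hdouble, hfull]
      simp only [hdiag]
      module

theorem sum_Ehat_mul_Ehat :
    ∑ pq ∈ Finset.univ.filter (fun pq : Fin n × Fin n => pq.1 ≤ pq.2),
      Ehat pq.1 pq.2 * Ehat pq.1 pq.2 = ((n + 1) / 2 : ℝ) • (1 : Matrix (Fin n) (Fin n) ℝ) := by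
  have h := sum_Ehat_mul_mul_Ehat (1 : Matrix (Fin n) (Fin n) ℝ)
  simp only [Matrix.mul_one, transpose_one, trace_one, Fintype.card_fin] at h
  rw [h]
  module

theorem sum_inner_mcomm_Ehat (A B : Matrix (Fin n) (Fin n) ℝ) (hB : Bᵀ = B) :
    ∑ pq ∈ Finset.univ.filter (fun pq : Fin n × Fin n => pq.1 ≤ pq.2),
        ∑ a, ∑ b, mcomm A (Ehat pq.1 pq.2) a b * mcomm B (Ehat pq.1 pq.2) a b
      = n * trace (A * B) - trace A * trace B := by
  have hBA : trace (B * Aᵀ) = trace (A * B) := by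
    rw [← trace_transpose, transpose_mul, transpose_transpose, hB]
  simp only [sum_mcomm_mul_mcomm A B _ hB (transpose_Ehat _ _), Finset.sum_sub_distrib,
    ← trace_sum, ← Finset.mul_sum]
  rw [sum_Ehat_mul_Ehat, sum_Ehat_mul_mul_Ehat, sum_Ehat_mul_mul_Ehat, hB]
  simp only [Matrix.mul_smul, Matrix.mul_add, Matrix.mul_one, trace_smul, trace_add, hBA,
    trace_mul_comm B A, smul_eq_mul]
  ring

end Ehat

theorem commutator_inner_sum (n : ℕ) (i j k l : Fin n)
    (hij : i ≤ j) (hkl : k ≤ l) :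
    ∑ pq ∈ Finset.univ.filter (fun pq : Fin n × Fin n => pq.1 ≤ pq.2),
        (∑ a, ∑ b, mcomm (Ehat i j) (Ehat pq.1 pq.2) a b *
          mcomm (Ehat k l) (Ehat pq.1 pq.2) a b) =
      (n : ℝ) * (if i = k ∧ j = l then 1 else 0) -
        (if i = j then 1 else 0) * (if k = l then 1 else 0) := by
  rw [sum_inner_mcomm_Ehat _ _ (transpose_Ehat k l), trace_Ehat_mul_Ehat hij hkl,
    trace_Ehat, trace_Ehat]
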